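/- arXiv:1704.06624 — 2 statements merged into one kernel-verified Lean document; each statement's English description precedes it below -/
import Mathlib

section
/- Let q ∈ (0,1/2) be irrational. Then for every integer j ≥ 1, the infinite sequence 1 0^{κ_j(q)} 11 0^{κ_{j+1}(q)} 11 0^{κ_{j+2}(q)} 11 ⋯ is strictly greater in the unimodal order than the infinite sequence 1 0^{κ_1(q)−1} 11 0^{κ_2(q)} 11 0^{κ_3(q)} 11 ⋯. -/
open Set

/-- Binary sequences. -/
abbrev Bseq := ℕ → Fin 2

/-- The strict unimodal order on binary sequences: `α ≺ β` iff at the least index `r` where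
they differ, the sum `∑_{i=0}^r α_i` is even. -/
def umLT (α β : Bseq) : Prop :=
  ∃ r : ℕ, (∀ i, i < r → α i = β i) ∧ α r ≠ β r ∧
    Even (∑ i ∈ Finset.range (r + 1), ((α i : ℕ)))

/-- `α ⪯ β` in the unimodal order. -/
def umLE (α β : Bseq) : Prop := umLT α β ∨ α = β

/-- The `r`-fold shift `σ^r`. -/
def shiftSeq (r : ℕ) (α : Bseq) : Bseq := fun i => α (i + r)

/-- A sequence is maximal if all its shifts are `⪯` it. -/
def MaximalSeq (α : Bseq) : Prop := ∀ r : ℕ, umLE (shiftSeq r α) α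

/-- Membership in `KS`: maximal sequences whose first two symbols are `10`. -/
def KSseq (α : Bseq) : Prop := MaximalSeq α ∧ α 0 = 1 ∧ α 1 = 0

/-- A (purely) periodic sequence. -/
def PeriodicSeq (α : Bseq) : Prop := ∃ p : ℕ, 0 < p ∧ ∀ i, α (i + p) = α i

/-- The periodic sequence `W^∞` determined by a finite word `W`. -/
def perSeq (W : List (Fin 2)) : Bseq := fun i => W.getD (i % W.length) 0

/-- The sequence `V W^∞`. -/
def preperSeq (V W : List (Fin 2)) : Bseq :=
  fun i => if i < V.length then V.getD i 0 else perSeq W (i - V.length)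

/-- The sequence `10 1^∞`. -/
def seq101 : Bseq := fun i => if i = 1 then 0 else 1

/-- The sequence `1σ²(α)`: `1` followed by `α₂ α₃ ⋯`. -/
def oneShift2 (α : Bseq) : Bseq := fun i => if i = 0 then 1 else α (i + 1)

/-- `κ_i(q)`: `κ_1(q) = ⌊1/q⌋ - 1`, and `κ_i(q) = ⌊i/q⌋ - ⌊(i-1)/q⌋ - 2` for `i ≥ 2`. -/
noncomputable def kap (q : ℝ) (i : ℕ) : ℕ :=
  if i = 1 then (⌊1 / q⌋ - 1).toNat
  else (⌊(i : ℝ) / q⌋ - ⌊((i : ℝ) - 1) / q⌋ - 2).toNat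

/-- The word `1 0^{κ_j(q)} 11 0^{κ_{j+1}(q)} 11 ⋯ 11 0^{κ_{j+M}(q)}`: an initial block
indexed `j` followed by `M` further blocks. -/
noncomputable def tailBody (q : ℝ) (j M : ℕ) : List (Fin 2) :=
  1 :: (List.replicate (kap q j) 0 ++
    (((List.range M).map fun t => 1 :: 1 :: List.replicate (kap q (j + 1 + t)) 0).flatten))

/-- The word `c_q = 1 0^{κ_1(q)} 11 0^{κ_2(q)} 11 ⋯ 11 0^{κ_m(q)} 1`. -/
noncomputable def cqWord (q : ℝ) (m : ℕ) : List (Fin 2) := tailBody q 1 (m - 1) ++ [1]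

/-- The word `w_q`, obtained from `c_q` by deleting its last two symbols. -/
noncomputable def wqWord (q : ℝ) (m : ℕ) : List (Fin 2) := (cqWord q m).dropLast.dropLast

/-- The word `ŵ_q`, the reverse of `w_q`. -/
noncomputable def hwqWord (q : ℝ) (m : ℕ) : List (Fin 2) := (wqWord q m).reverse

/-- The finite word `1 0^{κ_j(q)} 11 0^{κ_{j+1}(q)} ⋯ 11 0^{κ_m(q)} 1`. -/
noncomputable def tailWord (q : ℝ) (j m : ℕ) : List (Fin 2) := tailBody q j (m - j) ++ [1]

/-- The word `1 0^{κ_1(q)-1} 11 0^{κ_2(q)} 11 ⋯` with `M` blocks after the first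
(no closing `1`). -/
noncomputable def lowBody (q : ℝ) (M : ℕ) : List (Fin 2) :=
  1 :: (List.replicate (kap q 1 - 1) 0 ++
    (((List.range M).map fun t => 1 :: 1 :: List.replicate (kap q (2 + t)) 0).flatten))

/-- The finite word `1 0^{κ_1(q)-1} 11 0^{κ_2(q)} ⋯ 11 0^{κ_m(q)} 1`. -/
noncomputable def lowWord (q : ℝ) (m : ℕ) : List (Fin 2) := lowBody q (m - 1) ++ [1]

/-- The infinite sequence `1 0^{κ_j(q)} 11 0^{κ_{j+1}(q)} 11 0^{κ_{j+2}(q)} 11 ⋯`. -/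
noncomputable def tailSeq (q : ℝ) (j : ℕ) : Bseq := fun i => (tailBody q j (i + 1)).getD i 0

/-- The infinite sequence `1 0^{κ_1(q)-1} 11 0^{κ_2(q)} 11 0^{κ_3(q)} 11 ⋯`. -/
noncomputable def lowSeq (q : ℝ) : Bseq := fun i => (lowBody q (i + 1)).getD i 0

/-- The height `q(α) = inf({q ∈ (0,1/2] ∩ ℚ : (c_q0)^∞ ≺ α} ∪ {1/2})`. -/
noncomputable def height (α : Bseq) : ℝ :=
  sInf ({x : ℝ | ∃ q : ℚ, x = (q : ℝ) ∧ 0 < q ∧ q ≤ 1 / 2 ∧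
    umLT (perSeq (cqWord (q : ℝ) q.num.toNat ++ [0])) α} ∪ {1 / 2})

/-- A unimodal map `f : [a,b] → [a,b]` with turning point `c`. -/
structure Unimodal (a b c : ℝ) (f : ℝ → ℝ) : Prop where
  a_lt_b : a < b
  c_mem : c ∈ Ioo a b
  cont : ContinuousOn f (Icc a b)
  maps : MapsTo f (Icc a b) (Icc a b)
  mono : StrictMonoOn f (Icc a c)
  anti : StrictAntiOn f (Icc c b)
  map_c : f c = b
  map_b : f b = a

/-- `α` is an itinerary of `x` under the unimodal map `f` with turning point `c`. -/
def IsItin (f : ℝ → ℝ) (a b c x : ℝ) (α : Bseq) : Prop :=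
  ∀ r : ℕ, (α r = 0 → f^[r] x ∈ Icc a c) ∧ (α r = 1 → f^[r] x ∈ Icc c b)

/-- `κ` is the kneading sequence of `f`: the itinerary of `b` smallest in the unimodal order. -/
def IsKneading (f : ℝ → ℝ) (a b c : ℝ) (κ : Bseq) : Prop :=
  IsItin f a b c b κ ∧ ∀ β : Bseq, IsItin f a b c b β → umLE κ β

/-- The standing convention on unimodal maps. -/
structure Convention (f : ℝ → ℝ) (a b c : ℝ) (κ : Bseq) : Prop where
  kneading : IsKneading f a b c κ
  gt101 : umLT seq101 κ
  itin_inj : ¬ PeriodicSeq κ → ∀ x ∈ Icc a b, ∀ y ∈ Icc a b, ∀ α : Bseq,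
      IsItin f a b c x α → IsItin f a b c y α → x = y
  two_fixed : ∀ n : ℕ, 0 < n → ∀ μ : Bseq,
      {x | x ∈ Icc a b ∧ f^[n] x = x ∧ IsItin f a b c x μ}.encard ≤ 2 ∧
      ∀ x ∈ {x | x ∈ Icc a b ∧ f^[n] x = x ∧ IsItin f a b c x μ},
        ∀ y ∈ {x | x ∈ Icc a b ∧ f^[n] x = x ∧ IsItin f a b c x μ},
          x ≠ y → ∃ r : ℕ, κ = shiftSeq r μ

/-!
Put `θ = 1/q`. For `t ≥ 1` we have `κ_{t+1} + 2 = ⌊(t+1)θ⌋ - ⌊tθ⌋`, and `κ_1 - 1 + 2 = ⌊θ⌋`; so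
`lowSeq q` is the block coding `1 0^{e_0} 1 1 0^{e_1} 1 ⋯` of the steps `e_t + 2 = ⌊(t+1)θ⌋ - ⌊tθ⌋`
of the orbit of `0` under rotation by `θ`, and for `j ≥ 2` `tailSeq q j` codes the same steps
shifted by `d = j - 1`. Each block `1 0^e 1` holds two `1`s, so the unimodal order compares such
codings lexicographically in the exponents. While the steps at `t` and `d + t` agree,
`⌊(d+t)θ⌋ = ⌊dθ⌋ + ⌊tθ⌋`, hence `{(d+t)θ} ≥ {tθ}` and the next step at `d + t` is at least the one
at `t`; and since `dθ ∉ ℤ` the two step sequences cannot agree forever. For `j = 1` the first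
blocks already differ.
-/

/-- `1 0^k 1` followed by `α`. -/
def prependBlock (k : ℕ) (α : Bseq) : Bseq := fun i =>
  if i = 0 ∨ i = k + 1 then 1 else if i ≤ k then 0 else α (i - (k + 2))

section UnimodalOrder

variable {k l : ℕ} {α β : Bseq}

lemma prependBlock_add (i : ℕ) : prependBlock k α (k + 2 + i) = α i := by
  simp only [prependBlock]
  split_ifs <;> first | omega | congr 1; omega

lemma prependBlock_eq_of_lt {i : ℕ} (hi : i < k + 2) :
    prependBlock k α i = prependBlock k β i := by
  simp only [prependBlock]
  split_ifs <;> first | rfl | omega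

lemma sum_prependBlock :
    ∑ i ∈ Finset.range (k + 2), (prependBlock k α i : ℕ) = 2 := by
  rw [Finset.sum_range_succ, Finset.sum_range_succ']
  have hzero : ∀ i ∈ Finset.range k, (prependBlock k α (i + 1) : ℕ) = 0 := by
    intro i hi
    simp only [prependBlock, Finset.mem_range] at hi ⊢
    rw [if_neg (by omega), if_pos (by omega)]
    rfl
  rw [Finset.sum_congr rfl hzero]
  simp [prependBlock]

lemma umLT_prependBlock_of_lt (h : k < l) : umLT (prependBlock k α) (prependBlock l β) := by
  refine ⟨k + 1, fun i hi => ?_, ?_, ?_⟩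
  · simp only [prependBlock]
    split_ifs <;> first | rfl | omega
  · simp [prependBlock, h.ne, show k + 1 ≤ l by omega]
  · rw [sum_prependBlock]
    exact even_two

lemma umLT_prependBlock (h : umLT α β) : umLT (prependBlock k α) (prependBlock k β) := by
  obtain ⟨r, hagree, hne, heven⟩ := h
  refine ⟨k + 2 + r, fun i hi => ?_, ?_, ?_⟩
  · rcases Nat.lt_or_ge i (k + 2) with hi' | hi'
    · exact prependBlock_eq_of_lt hi'
    · obtain ⟨i, rfl⟩ := Nat.exists_eq_add_of_le hi'
      rw [prependBlock_add, prependBlock_add]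
      exact hagree i (by omega)
  · rwa [prependBlock_add, prependBlock_add]
  · rw [add_assoc, Finset.sum_range_add, sum_prependBlock]
    simpa only [prependBlock_add] using even_two.add heven

end UnimodalOrder

def blockWord (k : ℕ) (f : ℕ → ℕ) (M : ℕ) : List (Fin 2) :=
  1 :: (List.replicate k 0 ++
    ((List.range M).map fun t => 1 :: 1 :: List.replicate (f t) 0).flatten)

def blockLimit (k : ℕ) (f : ℕ → ℕ) : Bseq := fun i => (blockWord k f (i + 1)).getD i 0

section BlockWords

variable (k : ℕ) (f : ℕ → ℕ)

lemma blockWord_succ (M : ℕ) :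
    blockWord k f (M + 1) =
      (1 :: (List.replicate k 0 ++ [1])) ++ blockWord (f 0) (fun t => f (t + 1)) M := by
  simp [blockWord, List.range_succ_eq_map, List.map_map, Function.comp_def]

lemma blockWord_prefix (M d : ℕ) : blockWord k f M <+: blockWord k f (M + d) :=
  ⟨((List.range d).map fun t => 1 :: 1 :: List.replicate (f (M + t)) 0).flatten, by
    simp [blockWord, List.range_add, Function.comp_def]⟩

lemma lt_length_blockWord (M : ℕ) : M < (blockWord k f M).length := by
  induction M generalizing k f with
  | zero => simp [blockWord]
  | succ M ih =>
    rw [blockWord_succ, List.length_append]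
    have := ih (f 0) (fun t => f (t + 1))
    simp only [List.length_cons, List.length_append, List.length_replicate]
    omega

lemma blockLimit_eq_getD {i M : ℕ} (h : i < M) :
    blockLimit k f i = (blockWord k f M).getD i 0 := by
  obtain ⟨d, rfl⟩ := Nat.exists_eq_add_of_le h
  have hi := lt_length_blockWord k f (i + 1)
  have hpre := blockWord_prefix k f (i + 1) d
  rw [blockLimit, List.getD_eq_getElem _ _ (by omega),
    List.getD_eq_getElem _ _ (lt_of_lt_of_le (by omega) hpre.length_le)]
  exact hpre.getElem (i := i) (by omega)

lemma blockLimit_eq_prependBlock :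
    blockLimit k f = prependBlock k (blockLimit (f 0) (fun t => f (t + 1))) := by
  funext i
  rw [blockLimit_eq_getD k f (show i < i + 1 + 1 by omega), blockWord_succ]
  rcases Nat.lt_or_ge i (k + 2) with hi | hi
  · rw [List.getD_append _ _ _ _ (by simp; omega)]
    rcases i with _ | i
    · simp [prependBlock]
    · rw [List.getD_cons_succ]
      rcases Nat.lt_or_ge i k with hik | hik
      · rw [List.getD_append _ _ _ _ (by simpa using hik)]
        simp [prependBlock, hik]
        omega
      · rw [List.getD_append_right _ _ _ _ (by simpa using hik)]
        simp [prependBlock, show i = k by omega]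
  · have hlen : (1 :: (List.replicate k (0 : Fin 2) ++ [1])).length = k + 2 := by simp
    rw [List.getD_append_right _ _ _ _ (by omega), hlen,
      ← blockLimit_eq_getD _ _ (show i - (k + 2) < i + 1 by omega), prependBlock,
      if_neg (by omega), if_neg (by omega)]

end BlockWords

theorem umLT_blockLimit_of_lex {a b : ℕ → ℕ} (T : ℕ) (heq : ∀ t < T, a t = b t)
    (hlt : a T < b T) :
    umLT (blockLimit (a 0) (fun t => a (t + 1))) (blockLimit (b 0) (fun t => b (t + 1))) := by
  induction T generalizing a b with
  | zero =>
    rw [blockLimit_eq_prependBlock (a 0), blockLimit_eq_prependBlock (b 0)]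
    exact umLT_prependBlock_of_lt hlt
  | succ T ih =>
    rw [blockLimit_eq_prependBlock (a 0), blockLimit_eq_prependBlock (b 0),
      heq 0 (Nat.succ_pos T)]
    exact umLT_prependBlock (ih (fun t ht => heq (t + 1) (by omega)) hlt)

noncomputable def floorStep (θ : ℝ) (t : ℕ) : ℤ := ⌊((t : ℝ) + 1) * θ⌋ - ⌊(t : ℝ) * θ⌋

section FloorStep

variable {θ : ℝ} {d T : ℕ}

lemma floorStep_eq_floor_fract_add (θ : ℝ) (t : ℕ) :
    floorStep θ t = ⌊Int.fract ((t : ℝ) * θ) + θ⌋ := by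
  have h : ((t : ℝ) + 1) * θ = (⌊(t : ℝ) * θ⌋ : ℝ) + (Int.fract ((t : ℝ) * θ) + θ) := by
    rw [Int.fract]; ring
  rw [floorStep, h, Int.floor_intCast_add]
  ring

lemma floor_le_floorStep (θ : ℝ) (t : ℕ) : ⌊θ⌋ ≤ floorStep θ t := by
  rw [floorStep_eq_floor_fract_add]
  exact Int.floor_mono (by linarith [Int.fract_nonneg ((t : ℝ) * θ)])

lemma floorStep_le_of_fract_le {s t : ℕ}
    (h : Int.fract ((s : ℝ) * θ) ≤ Int.fract ((t : ℝ) * θ)) :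
    floorStep θ s ≤ floorStep θ t := by
  rw [floorStep_eq_floor_fract_add, floorStep_eq_floor_fract_add]
  exact Int.floor_mono (by linarith)

lemma floor_add_mul_of_forall_floorStep_eq (h : ∀ t < T, floorStep θ t = floorStep θ (d + t)) :
    ⌊((d : ℝ) + T) * θ⌋ = ⌊(d : ℝ) * θ⌋ + ⌊(T : ℝ) * θ⌋ := by
  induction T with
  | zero => simp
  | succ T ih =>
    have hT := h T (Nat.lt_succ_self T)
    have ih := ih fun t ht => h t (by omega)
    simp only [floorStep, Nat.cast_add] at hT
    push_cast
    rw [← add_assoc]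
    omega

lemma fract_add_mul_of_forall_floorStep_eq (h : ∀ t < T, floorStep θ t = floorStep θ (d + t)) :
    Int.fract (((d : ℝ) + T) * θ) = Int.fract ((d : ℝ) * θ) + Int.fract ((T : ℝ) * θ) := by
  rw [Int.fract, Int.fract, Int.fract, floor_add_mul_of_forall_floorStep_eq h]
  push_cast
  ring

lemma floorStep_le_of_forall_floorStep_eq (h : ∀ t < T, floorStep θ t = floorStep θ (d + t)) :
    floorStep θ T ≤ floorStep θ (d + T) := by
  apply floorStep_le_of_fract_le
  rw [Nat.cast_add, fract_add_mul_of_forall_floorStep_eq h]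
  linarith [Int.fract_nonneg ((d : ℝ) * θ)]

/-- Were the step sequence `d`-periodic, `k ↦ {k d θ} = k {d θ}` would be unbounded. -/
lemma exists_floorStep_ne (hθ : Irrational θ) (hd : 0 < d) :
    ∃ t, floorStep θ t ≠ floorStep θ (d + t) := by
  by_contra! hper
  have hmul : ∀ k : ℕ, Int.fract (((d * k : ℕ) : ℝ) * θ) = k * Int.fract ((d : ℝ) * θ) := by
    intro k
    induction k with
    | zero => simp
    | succ k ih =>
      rw [Nat.mul_succ, add_comm, Nat.cast_add,
        fract_add_mul_of_forall_floorStep_eq fun t _ => hper t, ih]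
      push_cast
      ring
  have hpos : 0 < Int.fract ((d : ℝ) * θ) := by
    rw [Int.fract_pos]
    exact (hθ.natCast_mul hd.ne').ne_int _
  obtain ⟨k, hk⟩ := exists_nat_gt (Int.fract ((d : ℝ) * θ))⁻¹
  have hlt := Int.fract_lt_one (((d * k : ℕ) : ℝ) * θ)
  rw [hmul, ← lt_div_iff₀ hpos, one_div] at hlt
  linarith

lemma exists_floorStep_lex_lt (hθ : Irrational θ) (hd : 0 < d) :
    ∃ T, (∀ t < T, floorStep θ t = floorStep θ (d + t)) ∧ floorStep θ T < floorStep θ (d + T) := by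
  classical
  have hex := exists_floorStep_ne hθ hd
  have heq : ∀ t < Nat.find hex, floorStep θ t = floorStep θ (d + t) :=
    fun t ht => not_not.1 (Nat.find_min hex ht)
  exact ⟨Nat.find hex, heq,
    lt_of_le_of_ne (floorStep_le_of_forall_floorStep_eq heq) (Nat.find_spec hex)⟩

end FloorStep

section Kneading

variable {q : ℝ}

lemma two_le_floorStep_inv (h0 : 0 < q) (h2 : q < 1 / 2) (t : ℕ) : 2 ≤ floorStep q⁻¹ t := by
  refine le_trans ?_ (floor_le_floorStep q⁻¹ t)
  rw [Int.le_floor, Int.cast_ofNat, le_inv_comm₀ two_pos h0]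
  linarith

lemma kap_one (h0 : 0 < q) (h2 : q < 1 / 2) : (kap q 1 : ℤ) = floorStep q⁻¹ 0 - 1 := by
  have := two_le_floorStep_inv h0 h2 0
  simp only [floorStep, CharP.cast_eq_zero, zero_add, one_mul, zero_mul, Int.floor_zero] at this
  simp [kap, floorStep]
  omega

lemma kap_succ (q : ℝ) {t : ℕ} (ht : 1 ≤ t) : kap q (t + 1) = (floorStep q⁻¹ t - 2).toNat := by
  simp only [kap, floorStep, if_neg (show t + 1 ≠ 1 by omega)]
  push_cast
  simp only [add_sub_cancel_right, div_eq_mul_inv]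

lemma lowSeq_eq_blockLimit_floorStep (h0 : 0 < q) (h2 : q < 1 / 2) :
    lowSeq q = blockLimit ((floorStep q⁻¹ 0 - 2).toNat)
      (fun t => (floorStep q⁻¹ (t + 1) - 2).toNat) := by
  have hk : kap q 1 - 1 = (floorStep q⁻¹ 0 - 2).toNat := by
    have := kap_one h0 h2
    omega
  have hf : (fun t => kap q (t + 2)) = fun t => (floorStep q⁻¹ (t + 1) - 2).toNat :=
    funext fun t => kap_succ q (Nat.succ_pos t)
  rw [← hk, ← hf]
  funext i
  simp only [lowSeq, lowBody, blockLimit, blockWord, add_comm 2]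

lemma tailSeq_eq_blockLimit (q : ℝ) (j : ℕ) :
    tailSeq q j = blockLimit (kap q j) (fun t => kap q (j + (t + 1))) := by
  funext i
  simp only [tailSeq, tailBody, blockLimit, blockWord, add_assoc, add_comm 1]

lemma tailSeq_eq_blockLimit_floorStep (q : ℝ) {j : ℕ} (hj : 2 ≤ j) :
    tailSeq q j = blockLimit ((floorStep q⁻¹ (j - 1) - 2).toNat)
      (fun t => (floorStep q⁻¹ (j - 1 + (t + 1)) - 2).toNat) := by
  obtain ⟨d, rfl⟩ : ∃ d, j = d + 1 := ⟨j - 1, by omega⟩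
  rw [tailSeq_eq_blockLimit, kap_succ q (by omega)]
  congr 1
  funext t
  rw [← kap_succ q (by omega), Nat.add_sub_cancel]
  ring_nf

end Kneading

/-- For irrational `q ∈ (0,1/2)` and `j ≥ 1`,
`1 0^{κ_j(q)} 11 0^{κ_{j+1}(q)} 11 ⋯ ≻ 1 0^{κ_1(q)-1} 11 0^{κ_2(q)} 11 ⋯` in the unimodal
order. -/
theorem stmt18 (q : ℝ) (h0 : 0 < q) (h2 : q < 1 / 2) (hirr : Irrational q)
    (j : ℕ) (hj : 1 ≤ j) :
    umLT (lowSeq q) (tailSeq q j) := by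
  rw [lowSeq_eq_blockLimit_floorStep h0 h2]
  obtain rfl | hj := hj.eq_or_lt
  · have hk1 := kap_one h0 h2
    have hstep := two_le_floorStep_inv h0 h2 0
    rw [tailSeq_eq_blockLimit, blockLimit_eq_prependBlock, blockLimit_eq_prependBlock (kap q 1)]
    exact umLT_prependBlock_of_lt (by omega)
  · rw [tailSeq_eq_blockLimit_floorStep q hj]
    obtain ⟨T, heq, hlt⟩ := exists_floorStep_lex_lt hirr.inv (d := j - 1) (by omega)
    refine umLT_blockLimit_of_lex (a := fun t => (floorStep q⁻¹ t - 2).toNat)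
      (b := fun t => (floorStep q⁻¹ (j - 1 + t) - 2).toNat) T
      (fun t ht => by simp only [heq t ht]) ?_
    have hstep := two_le_floorStep_inv h0 h2 T
    omega
end

section
/- Let q ∈ (0,1/2) be irrational. Then for every N ≥ 1: (i) there exists r ≥ 1 such that κ_{r+i}(q) = κ_i(q) for all 1 ≤ i ≤ N; and (ii) there exists s ≥ 1 such that κ_{s+1}(q) = κ_1(q) − 1 and κ_{s+i}(q) = κ_i(q) for all 2 ≤ i ≤ N. -/
open Set

/-
For `i ≥ 2`, `κ_i(q) + 2` is the jump `⌊i/q⌋ - ⌊(i-1)/q⌋`, and `κ_1(q) + 1` is the jump at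
`i = 1`. Since `⌊(s+j)/q⌋ = ⌊s/q⌋ + ⌊j/q⌋ + ⌊{s/q} + {j/q}⌋`, shifting the index by `s` keeps the
jump at `i` whenever the carries `⌊{s/q} + {j/q}⌋` at `j = i - 1` and `j = i` agree. If `{s/q}` is
small, every carry for `j ≤ N` vanishes; the jumps are then reproduced, and the different offset
in `κ_1` gives `κ_{s+1} = κ_1 - 1`. If `{r/q}` is close to `1`, the carries for `1 ≤ j ≤ N` are
`1` and the carry at `j = 0` is `0`, so the jump at `r + 1` exceeds the one at `1` by exactly the
offset, giving `κ_{r+1} = κ_1`. Both kinds of shifts exist because `1/q` is irrational: Dirichlet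
gives a multiple of `1/q` close to an integer, and the fractional parts of its multiples then
reach both sides.
-/

open Int

section FloorRing

variable {α : Type*} [Ring α] [LinearOrder α] [IsStrictOrderedRing α] [FloorRing α]

theorem Int.floor_add_eq_add_floor_fract_add (x y : α) :
    ⌊x + y⌋ = ⌊x⌋ + ⌊y⌋ + ⌊fract x + fract y⌋ := by
  rw [← Int.floor_intCast_add]
  push_cast
  rw [add_add_add_comm, floor_add_fract, floor_add_fract]

theorem Int.fract_natCast_mul_of_lt_one {x : α} {k : ℕ} (h : k * fract x < 1) :
    fract (k * x) = k * fract x :=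
  fract_eq_iff.2 ⟨by have := fract_nonneg x; positivity, h, k * ⌊x⌋, by
    push_cast
    rw [fract, mul_sub, sub_sub_cancel]⟩

theorem Int.floor_fract_add_fract_eq_zero {x y : α} (h : fract x + fract y < 1) :
    ⌊fract x + fract y⌋ = 0 :=
  floor_eq_zero_iff.2 ⟨add_nonneg (fract_nonneg x) (fract_nonneg y), h⟩

theorem Int.floor_fract_add_fract_eq_one {x y : α} (h : 1 ≤ fract x + fract y) :
    ⌊fract x + fract y⌋ = 1 :=
  floor_eq_iff.2 ⟨by simpa using h, by push_cast; exact add_lt_add (fract_lt_one x) (fract_lt_one y)⟩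

end FloorRing

theorem exists_pos_nat_one_sub_lt_fract_mul_of_fract_lt {x ε : ℝ} (hx : 0 < fract x)
    (hxε : fract x < ε) : ∃ k : ℕ, 0 < k ∧ 1 - ε < fract (k * x) := by
  set δ := fract x
  have hceil : 1 < ⌈δ⁻¹⌉₊ := Nat.lt_ceil.2 (by simpa using one_lt_inv_iff₀.2 ⟨hx, fract_lt_one x⟩)
  obtain ⟨k, hk⟩ : ∃ k, ⌈δ⁻¹⌉₊ = k + 1 := ⟨_, (Nat.sub_add_cancel hceil.le).symm⟩
  have hkδ : k * δ < 1 := by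
    have := Nat.ceil_lt_add_one (inv_nonneg.2 hx.le)
    rw [hk, Nat.cast_add_one] at this
    calc k * δ < δ⁻¹ * δ := by gcongr; linarith
      _ = 1 := inv_mul_cancel₀ hx.ne'
  have hk1δ : 1 ≤ (k + 1) * δ :=
    calc 1 = δ⁻¹ * δ := (inv_mul_cancel₀ hx.ne').symm
      _ ≤ (k + 1) * δ := by gcongr; exact_mod_cast hk ▸ Nat.le_ceil _
  refine ⟨k, by omega, ?_⟩
  rw [fract_natCast_mul_of_lt_one hkδ]
  linarith

theorem Irrational.fract_pos {x : ℝ} (hx : Irrational x) : 0 < fract x :=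
  (fract_nonneg x).lt_of_ne' <| fract_ne_zero_iff.2 fun ⟨z, hz⟩ => hx.ne_int z hz.symm

theorem Irrational.exists_pos_nat_one_sub_lt_fract_mul {θ ε : ℝ} (hθ : Irrational θ)
    (hε : 0 < ε) : ∃ n : ℕ, 0 < n ∧ 1 - ε < fract (n * θ) := by
  obtain ⟨m, hm⟩ := exists_nat_one_div_lt hε
  obtain ⟨n, hn0, -, hn⟩ := Real.exists_nat_abs_mul_sub_round_le θ m.succ_pos
  have hnε : min (fract (n * θ)) (1 - fract (n * θ)) < ε := by
    refine (abs_sub_round_eq_min (n * θ) ▸ hn).trans_lt (lt_of_le_of_lt ?_ hm)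
    gcongr
    linarith
  rcases min_lt_iff.1 hnε with hsmall | hlarge
  · obtain ⟨k, hk0, hk⟩ := exists_pos_nat_one_sub_lt_fract_mul_of_fract_lt
      (hθ.natCast_mul hn0.ne').fract_pos hsmall
    exact ⟨k * n, Nat.mul_pos hk0 hn0, by rwa [Nat.cast_mul, mul_assoc]⟩
  · exact ⟨n, hn0, by linarith⟩

theorem Irrational.exists_pos_nat_fract_mul_lt {θ ε : ℝ} (hθ : Irrational θ) (hε : 0 < ε) :
    ∃ n : ℕ, 0 < n ∧ fract (n * θ) < ε := by
  obtain ⟨n, hn0, hn⟩ := hθ.neg.exists_pos_nat_one_sub_lt_fract_mul hε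
  rw [mul_neg, fract_neg (hθ.natCast_mul hn0.ne').fract_pos.ne'] at hn
  exact ⟨n, hn0, by linarith⟩

noncomputable def floorJump (q : ℝ) (i : ℕ) : ℤ := ⌊(i : ℝ) / q⌋ - ⌊((i : ℝ) - 1) / q⌋

theorem kap_of_ne_one {q : ℝ} {i : ℕ} (hi : i ≠ 1) : kap q i = (floorJump q i - 2).toNat := by
  rw [kap, if_neg hi, floorJump]

theorem kap_one_s19 (q : ℝ) : kap q 1 = (floorJump q 1 - 1).toNat := by
  simp [kap, floorJump]

theorem floorJump_add (q : ℝ) (s i : ℕ) :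
    floorJump q (s + i) = floorJump q i + ⌊fract (s / q) + fract (i / q)⌋ -
      ⌊fract (s / q) + fract ((i - 1) / q)⌋ := by
  simp only [floorJump, Nat.cast_add, add_div, add_sub_assoc,
    Int.floor_add_eq_add_floor_fract_add ((s : ℝ) / q)]
  ring

theorem kap_add_eq_of_one_sub_fract_le {q : ℝ} {r i : ℕ} (hi : 1 ≤ i)
    (hr : ∀ j, 1 ≤ j → j ≤ i → 1 - fract (j / q) ≤ fract (r / q)) :
    kap q (r + i) = kap q i := by
  rcases Nat.eq_zero_or_pos r with rfl | hr0
  · rw [zero_add]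
  have hcarry : ∀ j, 1 ≤ j → j ≤ i → ⌊fract (r / q) + fract (j / q)⌋ = 1 := fun j hj hji =>
    floor_fract_add_fract_eq_one (by linarith [hr j hj hji])
  rw [kap_of_ne_one (by omega), floorJump_add, hcarry i hi le_rfl]
  rcases hi.eq_or_lt with rfl | hi2
  · simp only [kap_one_s19, Nat.cast_one, sub_self, zero_div, fract_zero, add_zero, floor_fract]
    omega
  · rw [kap_of_ne_one hi2.ne', ← Nat.cast_pred hi, hcarry (i - 1) (by omega) (by omega)]
    omega

theorem kap_add_eq_of_fract_lt {q : ℝ} {s i : ℕ} (hi : 2 ≤ i)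
    (hs : ∀ j ≤ i, fract (s / q) < 1 - fract (j / q)) : kap q (s + i) = kap q i := by
  have hcarry : ∀ j ≤ i, ⌊fract (s / q) + fract (j / q)⌋ = 0 := fun j hji =>
    floor_fract_add_fract_eq_zero (by linarith [hs j hji])
  rw [kap_of_ne_one (by omega), kap_of_ne_one (by omega), floorJump_add, hcarry i le_rfl,
    ← Nat.cast_pred (by omega), hcarry (i - 1) (by omega)]
  omega

theorem kap_add_one_eq_of_fract_lt {q : ℝ} {s : ℕ} (hs0 : 1 ≤ s)
    (hs : fract (s / q) < 1 - fract (1 / q)) : kap q (s + 1) = kap q 1 - 1 := by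
  rw [kap_of_ne_one (by omega), kap_one_s19, floorJump_add, Nat.cast_one,
    floor_fract_add_fract_eq_zero (by linarith)]
  simp only [sub_self, zero_div, fract_zero, add_zero, floor_fract]
  omega

theorem exists_kap_add_eq (q : ℝ) (hq : Irrational q) (N : ℕ) :
    ∃ r : ℕ, 1 ≤ r ∧ ∀ i, 1 ≤ i → i ≤ N → kap q (r + i) = kap q i := by
  have hpos : ∀ j ∈ Finset.Icc 1 N, 0 < fract ((j : ℝ) / q) := fun j hj => by
    rw [div_eq_mul_inv]
    exact (hq.inv.natCast_mul (by simp at hj; omega)).fract_pos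
  obtain ⟨ε, hε, hεj⟩ :=
    ((Finset.eventually_all _).2 fun j hj => eventually_lt_nhds (hpos j hj)).exists_gt
  obtain ⟨r, hr0, hr⟩ := hq.inv.exists_pos_nat_one_sub_lt_fract_mul hε
  rw [← div_eq_mul_inv] at hr
  refine ⟨r, hr0, fun i hi hiN => kap_add_eq_of_one_sub_fract_le hi fun j hj hji => ?_⟩
  linarith [hεj j (Finset.mem_Icc.2 ⟨hj, hji.trans hiN⟩)]

theorem exists_kap_add_one_eq_sub_one (q : ℝ) (hq : Irrational q) (N : ℕ) :
    ∃ s : ℕ, 1 ≤ s ∧ kap q (s + 1) = kap q 1 - 1 ∧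
      ∀ i, 2 ≤ i → i ≤ N → kap q (s + i) = kap q i := by
  have hpos : ∀ j ∈ Finset.range (N + 2), 0 < 1 - fract ((j : ℝ) / q) := fun j _ =>
    sub_pos.2 (fract_lt_one _)
  obtain ⟨ε, hε, hεj⟩ :=
    ((Finset.eventually_all _).2 fun j hj => eventually_lt_nhds (hpos j hj)).exists_gt
  obtain ⟨s, hs0, hs⟩ := hq.inv.exists_pos_nat_fract_mul_lt hε
  rw [← div_eq_mul_inv] at hs
  have hsj : ∀ j ≤ N + 1, fract ((s : ℝ) / q) < 1 - fract (j / q) := fun j hj =>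
    hs.trans (hεj j (Finset.mem_range.2 (by omega)))
  refine ⟨s, hs0, kap_add_one_eq_of_fract_lt hs0 (by simpa using hsj 1 (by omega)),
    fun i hi hiN => kap_add_eq_of_fract_lt hi fun j hj => hsj j (by omega)⟩

theorem stmt19_general (q : ℝ) (hirr : Irrational q) (N : ℕ) :
    (∃ r : ℕ, 1 ≤ r ∧ ∀ i, 1 ≤ i → i ≤ N → kap q (r + i) = kap q i) ∧
    (∃ s : ℕ, 1 ≤ s ∧ kap q (s + 1) = kap q 1 - 1 ∧
      ∀ i, 2 ≤ i → i ≤ N → kap q (s + i) = kap q i) :=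
  ⟨exists_kap_add_eq q hirr N, exists_kap_add_one_eq_sub_one q hirr N⟩

/-- For irrational `q ∈ (0,1/2)` and every `N ≥ 1`, the sequence `κ_i(q)`
recurs: some shift by `r ≥ 1` reproduces its first `N` terms; and some shift by `s ≥ 1`
reproduces `κ_1(q) - 1` followed by `κ_2(q), …, κ_N(q)`. -/
theorem stmt19 (q : ℝ) (h0 : 0 < q) (h2 : q < 1 / 2) (hirr : Irrational q)
    (N : ℕ) (hN : 1 ≤ N) :
    (∃ r : ℕ, 1 ≤ r ∧ ∀ i, 1 ≤ i → i ≤ N → kap q (r + i) = kap q i) ∧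
    (∃ s : ℕ, 1 ≤ s ∧ kap q (s + 1) = kap q 1 - 1 ∧
      ∀ i, 2 ≤ i → i ≤ N → kap q (s + i) = kap q i) :=
  stmt19_general q hirr N
end
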